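/- Let θ be a ternary relation on ℕ, X ⊆ ℕ a finite set and n ∈ ℕ. If X is ω^{n+2}-large*(θ) and exp-sparse, then for every coloring f : X → {0,…,min X−1} there is an f-homogeneous ω^n-large*(θ) subset of X (f-homogeneous means f is constant on the subset). -/

import Mathlib

/-- The minimum of a finite set of naturals (`0` if empty). -/
noncomputable def minN (X : Finset ℕ) : ℕ := sInf (X : Set ℕ)

/-- The maximum of a finite set of naturals (`0` if empty). -/
def maxN (X : Finset ℕ) : ℕ := X.sup id

/-- `E` lies entirely below `F`. -/
def SetBelow (E F : Finset ℕ) : Prop := ∀ x ∈ E, ∀ y ∈ F, x < y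

/-- `E` and `F` are `θ`-apart: for every `x < max E` there is `y < min F`
with `θ x y z` for all `z < max F`. -/
def ThetaApart (θ : ℕ → ℕ → ℕ → Prop) (E F : Finset ℕ) : Prop :=
  ∀ x < maxN E, ∃ y < minN F, ∀ z < maxN F, θ x y z

/-- `L·k`: finite sets containing `k` pairwise `θ`-apart members `X₀ < ⋯ < X_{k-1}` of `L`. -/
def MulK (θ : ℕ → ℕ → ℕ → Prop) (L : Set (Finset ℕ)) (k : ℕ) : Set (Finset ℕ) :=
  {F | ∃ X : Fin k → Finset ℕ, (∀ i, X i ∈ L) ∧ (∀ i, X i ⊆ F) ∧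
    ∀ i j, i < j → SetBelow (X i) (X j) ∧ ThetaApart θ (X i) (X j)}

/-- `L·σ` for a finite sequence `σ`: `L·ε = L`, `L·(k⌢τ) = (L·k)·τ`. -/
def MulSeq (θ : ℕ → ℕ → ℕ → Prop) (L : Set (Finset ℕ)) : List ℕ → Set (Finset ℕ)
  | [] => L
  | k :: τ => MulSeq θ (MulK θ L k) τ

/-- `L^θ_n`: the `ω^n`-large*(θ) finite sets. -/
noncomputable def LargeStar (θ : ℕ → ℕ → ℕ → Prop) : ℕ → Set (Finset ℕ)
  | 0 => {X | X.Nonempty}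
  | n + 1 => {X | X.Nonempty ∧
      X.erase (minN X) ∈ MulSeq θ (LargeStar θ n) (List.replicate (n + 1) (minN X))}

/-- `ω^n`-largeness(θ) (the non-starred notion). -/
noncomputable def LargeTheta (θ : ℕ → ℕ → ℕ → Prop) : ℕ → Set (Finset ℕ)
  | 0 => {X | X.Nonempty}
  | n + 1 => {X | X.Nonempty ∧ X.erase (minN X) ∈ MulK θ (LargeTheta θ n) (minN X)}

/-- `L·k` without θ-apartness (plain largeness product). -/
def MulKPlain (L : Set (Finset ℕ)) (k : ℕ) : Set (Finset ℕ) :=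
  {F | ∃ X : Fin k → Finset ℕ, (∀ i, X i ∈ L) ∧ (∀ i, X i ⊆ F) ∧
    ∀ i j, i < j → SetBelow (X i) (X j)}

/-- Ketonen–Solovay `ω^n`-largeness (no θ). -/
noncomputable def LargePlain : ℕ → Set (Finset ℕ)
  | 0 => {X | X.Nonempty}
  | n + 1 => {X | X.Nonempty ∧ X.erase (minN X) ∈ MulKPlain (LargePlain n) (minN X)}

/-- `g`-sparsity. -/
def GSparse (g : ℕ → ℕ) (X : Finset ℕ) : Prop := ∀ x ∈ X, ∀ y ∈ X, x < y → g x < y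

/-- exp-sparsity. -/
def ExpSparse (X : Finset ℕ) : Prop := ∀ x ∈ X, ∀ y ∈ X, x < y → 4 ^ x < y

/-- `ω^k`-sparsity. -/
def OmegaSparse (k : ℕ) (X : Finset ℕ) : Prop :=
  ∀ x ∈ X, ∀ y ∈ X, x < y → Finset.Ioc x y ∈ LargePlain k

/-!
Write `m = min X`. Then `X ∖ {m}` is `ω^{n+1}·m^{n+2}`-large*, so it contains `m + 1 ≤ m²`
consecutive `ω^{n+1}`-large* blocks `Z₀ < ⋯ < Z_m`, and the claim for such a configuration is
proved by induction on `n`. The minimum `ν` of `Z_{j+1}` (`j < m`) exceeds `4 ^ max Z_j` by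
exp-sparseness, and the tail `Z_{j+1} ∖ {ν}` is `ω^{n+1}·ν^{n+2}`-large* with
`ν ≥ (m + 1)(max Z_j + 1)`. The induction hypothesis at the innermost level and the pigeonhole
principle at each outer level give a monochromatic `T_j ⊆ Z_{j+1}` that is
`ω^n·(max Z_j + 1)^{n+1}`-large*, of colour `c_j`; `θ`-apartness passes to subsets, so it survives
the selections. Any point `μ ≤ max Z_j` of colour `c_j` lying below `T_j` makes `{μ} ∪ T_j`
`ω^{n+1}`-large*. Such a point exists: either `c_a = c_b` for some `a < b`, and any point of `T_a`
works for `T_b`, or the `m` colours `c_j` are all distinct, hence exhaust the `m` colours, and any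
point of `Z₀` works.
-/

open Finset

section Basic

lemma minN_mem {X : Finset ℕ} (h : X.Nonempty) : minN X ∈ X := by
  have h' : (X : Set ℕ).Nonempty := by exact_mod_cast h
  exact_mod_cast Nat.sInf_mem h'

lemma minN_le {X : Finset ℕ} {x : ℕ} (hx : x ∈ X) : minN X ≤ x :=
  Nat.sInf_le (by exact_mod_cast hx)

lemma le_maxN {X : Finset ℕ} {x : ℕ} (hx : x ∈ X) : x ≤ maxN X :=
  le_sup (f := id) hx

lemma maxN_mem {X : Finset ℕ} (h : X.Nonempty) : maxN X ∈ X := by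
  obtain ⟨b, hb, he⟩ := exists_mem_eq_sup X h id
  rw [maxN, he]
  exact hb

lemma lt_of_mem_erase_minN {X : Finset ℕ} {x : ℕ} (hx : x ∈ X.erase (minN X)) : minN X < x :=
  (minN_le (mem_of_mem_erase hx)).lt_of_ne (ne_of_mem_erase hx).symm

lemma minN_insert_of_forall_lt {Y : Finset ℕ} {a : ℕ} (h : ∀ x ∈ Y, a < x) :
    minN (insert a Y) = a := by
  refine le_antisymm (minN_le (mem_insert_self a Y)) ?_
  refine le_csInf ⟨a, by simp⟩ fun b hb => ?_
  rcases mem_insert.mp (mem_coe.mp hb) with rfl | hb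
  exacts [le_rfl, (h b hb).le]

lemma ExpSparse.mono {X Y : Finset ℕ} (hX : ExpSparse X) (hYX : Y ⊆ X) : ExpSparse Y :=
  fun x hx y hy => hX x (hYX hx) y (hYX hy)

lemma mul_succ_lt_four_pow (M : ℕ) : M * (M + 1) < 4 ^ M := calc
  M * (M + 1) < 2 ^ M * 2 ^ M := Nat.mul_lt_mul_of_lt_of_le Nat.lt_two_pow_self
    Nat.lt_two_pow_self (Nat.two_pow_pos M)
  _ = 4 ^ M := by rw [← mul_pow]; norm_num

lemma setBelow_mono {E E' F F' : Finset ℕ} (hE : E' ⊆ E) (hF : F' ⊆ F)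
    (h : SetBelow E F) : SetBelow E' F' :=
  fun x hx y hy => h x (hE hx) y (hF hy)

lemma le_maxN_of_le {k : ℕ} {Z : Fin k → Finset ℕ}
    (hZ : ∀ i j, i < j → SetBelow (Z i) (Z j)) {i j : Fin k} (hij : i ≤ j) {x : ℕ}
    (hx : x ∈ Z i) (hne : (Z j).Nonempty) : x ≤ maxN (Z j) := by
  rcases hij.lt_or_eq with h | rfl
  · exact (hZ i j h x hx _ (maxN_mem hne)).le
  · exact le_maxN hx

end Basic

section Products

variable {θ : ℕ → ℕ → ℕ → Prop}

lemma ThetaApart.mono {E E' F F' : Finset ℕ} (h : ThetaApart θ E F) (hE : E' ⊆ E)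
    (hF : F' ⊆ F) (hF' : F'.Nonempty) : ThetaApart θ E' F' := by
  intro x hx
  obtain ⟨y, hy, hz⟩ := h x (hx.trans_le (sup_mono hE))
  exact ⟨y, hy.trans_le (minN_le (hF (minN_mem hF'))),
    fun z hz' => hz z (hz'.trans_le (sup_mono hF))⟩

lemma mulK_mono {L L' : Set (Finset ℕ)} (h : L ⊆ L') (k : ℕ) : MulK θ L k ⊆ MulK θ L' k := by
  rintro F ⟨W, hWL, hWF, hW⟩
  exact ⟨W, fun i => h (hWL i), hWF, hW⟩

lemma mulK_anti {a b : ℕ} (h : a ≤ b) (L : Set (Finset ℕ)) : MulK θ L b ⊆ MulK θ L a := by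
  rintro F ⟨W, hWL, hWF, hW⟩
  exact ⟨fun i => W (Fin.castLE h i), fun i => hWL _, fun i => hWF _,
    fun i j hij => hW _ _ ((Fin.castLE_lt_castLE_iff h).mpr hij)⟩

lemma mulK_subset_mulKPlain (L : Set (Finset ℕ)) (k : ℕ) : MulK θ L k ⊆ MulKPlain L k := by
  rintro F ⟨W, hWL, hWF, hW⟩
  exact ⟨W, hWL, hWF, fun i j hij => (hW i j hij).1⟩

lemma mulSeq_append (L : Set (Finset ℕ)) (σ τ : List ℕ) :
    MulSeq θ L (σ ++ τ) = MulSeq θ (MulSeq θ L σ) τ := by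
  induction σ generalizing L with
  | nil => rfl
  | cons k σ ih => exact ih _

lemma mulSeq_replicate_succ (L : Set (Finset ℕ)) (r k : ℕ) :
    MulSeq θ L (List.replicate (r + 1) k) = MulK θ (MulSeq θ L (List.replicate r k)) k := by
  rw [List.replicate_succ', mulSeq_append]
  rfl

lemma mulSeq_replicate_anti {a b : ℕ} (h : a ≤ b) (L : Set (Finset ℕ)) (r : ℕ) :
    MulSeq θ L (List.replicate r b) ⊆ MulSeq θ L (List.replicate r a) := by
  induction r with
  | zero => exact subset_rfl
  | succ r ih =>
    rw [mulSeq_replicate_succ, mulSeq_replicate_succ]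
    exact (mulK_mono ih b).trans (mulK_anti h _)

lemma exists_subset_of_mem_mulSeq_replicate {k : ℕ} (hk : 0 < k) {L : Set (Finset ℕ)} (r : ℕ)
    {F : Finset ℕ} (hF : F ∈ MulSeq θ L (List.replicate r k)) : ∃ P ∈ L, P ⊆ F := by
  induction r generalizing F with
  | zero => exact ⟨F, hF, subset_rfl⟩
  | succ r ih =>
    rw [mulSeq_replicate_succ] at hF
    obtain ⟨W, hWL, hWF, -⟩ := hF
    obtain ⟨P, hP, hPW⟩ := ih (hWL ⟨0, hk⟩)
    exact ⟨P, hP, hPW.trans (hWF _)⟩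

lemma biUnion_mem_mulK {L : Set (Finset ℕ)} {d ν : ℕ} {W : Fin ν → Finset ℕ}
    (hW : ∀ i j, i < j → SetBelow (W i) (W j) ∧ ThetaApart θ (W i) (W j))
    {e : Fin d → Fin ν} (he : StrictMono e) {T : Fin d → Finset ℕ} (hTL : ∀ j, T j ∈ L)
    (hTW : ∀ j, T j ⊆ W (e j)) (hTne : ∀ j, (T j).Nonempty) :
    univ.biUnion T ∈ MulK θ L d := by
  refine ⟨T, hTL, fun j => subset_biUnion_of_mem T (mem_univ j), fun i j hij => ?_⟩
  obtain ⟨hbelow, hapart⟩ := hW _ _ (he hij)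
  exact ⟨setBelow_mono (hTW i) (hTW j) hbelow, hapart.mono (hTW i) (hTW j) (hTne j)⟩

lemma nonempty_of_mem_largeStar {n : ℕ} {X : Finset ℕ} (h : X ∈ LargeStar θ n) :
    X.Nonempty := by
  cases n with
  | zero => exact h
  | succ n => exact h.1

lemma insert_mem_largeStar_succ {n k μ : ℕ} {T : Finset ℕ} (hμT : ∀ x ∈ T, μ < x)
    (hμk : μ ≤ k) (hT : T ∈ MulSeq θ (LargeStar θ n) (List.replicate (n + 1) k)) :
    insert μ T ∈ LargeStar θ (n + 1) := by
  refine ⟨insert_nonempty μ T, ?_⟩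
  rw [minN_insert_of_forall_lt hμT, erase_insert fun h => (hμT μ h).false]
  exact mulSeq_replicate_anti hμk _ _ hT

end Products

section Plain

variable {L L' : Set (Finset ℕ)}

lemma mulKPlain_anti {a b : ℕ} (h : a ≤ b) : MulKPlain L b ⊆ MulKPlain L a := by
  rintro F ⟨W, hWL, hWF, hW⟩
  exact ⟨fun i => W (Fin.castLE h i), fun i => hWL _, fun i => hWF _,
    fun i j hij => hW _ _ ((Fin.castLE_lt_castLE_iff h).mpr hij)⟩

lemma mulKPlain_subset_of_forall_exists_subset (h : ∀ A ∈ L', ∃ B ∈ L, B ⊆ A) (k : ℕ) :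
    MulKPlain L' k ⊆ MulKPlain L k := by
  rintro F ⟨W, hWL, hWF, hW⟩
  choose V hVL hVW using fun i => h (W i) (hWL i)
  exact ⟨V, hVL, fun i => (hVW i).trans (hWF i),
    fun i j hij => setBelow_mono (hVW i) (hVW j) (hW i j hij)⟩

lemma mulKPlain_mono (h : L' ⊆ L) (k : ℕ) : MulKPlain L' k ⊆ MulKPlain L k :=
  mulKPlain_subset_of_forall_exists_subset (fun A hA => ⟨A, h hA, subset_rfl⟩) k

lemma mulKPlain_mulKPlain_subset (a b : ℕ) : MulKPlain (MulKPlain L a) b ⊆ MulKPlain L (b * a) := by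
  rintro F ⟨W, hWL, hWF, hW⟩
  choose V hVL hVW hV using hWL
  refine ⟨fun i => V i.divNat i.modNat, fun i => hVL _ _, fun i => (hVW _ _).trans (hWF _),
    fun i j hij => ?_⟩
  have hij' : (i : ℕ) < j := hij
  rcases (Nat.div_le_div_right (c := a) hij'.le).lt_or_eq with hlt | heq
  · exact setBelow_mono (hVW _ _) (hVW _ _) (hW _ _ (by simpa [Fin.lt_def] using hlt))
  · have hdiv : i.divNat = j.divNat := Fin.ext (by simpa using heq)
    have hmod : (i : ℕ) % a < j % a := by
      have hi := Nat.div_add_mod i a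
      have hj := Nat.div_add_mod j a
      rw [heq] at hi
      omega
    simp only [hdiv]
    exact hV _ _ _ (by simpa [Fin.lt_def] using hmod)

end Plain

section Pigeonhole

lemma exists_strictMono_forall_eq {m d ν : ℕ} (c : Fin ν → ℕ) (hc : ∀ k, c k < m)
    (hν : m * d < ν) : ∃ y < m, ∃ e : Fin d → Fin ν, StrictMono e ∧ ∀ j, c (e j) = y := by
  have hmaps : ∀ k ∈ (univ : Finset (Fin ν)), c k ∈ range m := fun k _ => mem_range.mpr (hc k)
  obtain ⟨y, hy, hfiber⟩ := exists_lt_card_fiber_of_mul_lt_card_of_maps_to hmaps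
    (by simpa using hν)
  obtain ⟨S, hS, hScard⟩ := exists_subset_card_eq hfiber.le
  exact ⟨y, mem_range.mp hy, fun j => S.orderEmbOfFin hScard j,
    (S.orderEmbOfFin hScard).strictMono,
    fun j => (mem_filter.mp (hS (S.orderEmbOfFin_mem hScard j))).2⟩

lemma exists_lt_eq_or_forall_exists_eq {m : ℕ} (c : Fin m → ℕ) (hc : ∀ j, c j < m) :
    (∃ a b, a < b ∧ c a = c b) ∨ ∀ y < m, ∃ j, c j = y := by
  by_cases hinj : Function.Injective c
  · right
    intro y hy
    have hsurj : Function.Surjective fun j => (⟨c j, hc j⟩ : Fin m) :=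
      Finite.injective_iff_surjective.mp fun a b hab => hinj (congrArg Fin.val hab)
    obtain ⟨j, hj⟩ := hsurj ⟨y, hy⟩
    exact ⟨j, congrArg Fin.val hj⟩
  · left
    obtain ⟨a, b, hab, hne⟩ := Function.not_injective_iff.mp hinj
    rcases lt_or_gt_of_ne hne with h | h
    exacts [⟨a, b, h, hab⟩, ⟨b, a, h, hab.symm⟩]

end Pigeonhole

section Homogeneous

variable {θ : ℕ → ℕ → ℕ → Prop} {f : ℕ → ℕ} {m n : ℕ} {U : Finset ℕ}

def BlockPigeonhole (θ : ℕ → ℕ → ℕ → Prop) (f : ℕ → ℕ) (m n : ℕ) (U : Finset ℕ) : Prop :=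
  ∀ F ⊆ U, F ∈ MulKPlain (LargeStar θ (n + 1)) (m + 1) →
    ∃ Y ⊆ F, Y ∈ LargeStar θ n ∧ ∀ x ∈ Y, ∀ y ∈ Y, f x = f y

lemma blockPigeonhole_zero : BlockPigeonhole θ f m 0 U := by
  rintro F - ⟨Z, hZL, hZF, -⟩
  obtain ⟨y, hy⟩ := nonempty_of_mem_largeStar (hZL 0)
  refine ⟨{y}, singleton_subset_iff.mpr (hZF 0 hy), singleton_nonempty y, ?_⟩
  simp

lemma exists_monochromatic_of_mem_mulSeq (hfU : ∀ x ∈ U, f x < m)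
    (ih : BlockPigeonhole θ f m n U) {d ν : ℕ} (hd : 0 < d) (hν : (m + 1) * d ≤ ν) (r : ℕ)
    {G : Finset ℕ} (hGU : G ⊆ U)
    (hG : G ∈ MulSeq θ (LargeStar θ (n + 1)) (List.replicate (r + 1) ν)) :
    ∃ c < m, ∃ T ⊆ G, T.Nonempty ∧ T ∈ MulSeq θ (LargeStar θ n) (List.replicate r d) ∧
      ∀ x ∈ T, f x = c := by
  induction r generalizing G with
  | zero =>
    have hm : m + 1 ≤ ν := le_trans (Nat.le_mul_of_pos_right _ hd) hν
    obtain ⟨Y, hYG, hY, hYf⟩ := ih G hGU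
      (mulKPlain_anti hm (mulK_subset_mulKPlain _ _ hG))
    obtain ⟨y, hy⟩ := nonempty_of_mem_largeStar hY
    exact ⟨f y, hfU y (hGU (hYG hy)), Y, hYG, ⟨y, hy⟩, hY, fun x hx => hYf x hx y hy⟩
  | succ r ih' =>
    rw [mulSeq_replicate_succ] at hG
    obtain ⟨W, hWL, hWG, hW⟩ := hG
    choose c hc T hTW hTne hTL hTc using fun k => ih' ((hWG k).trans hGU) (hWL k)
    obtain ⟨y, hy, e, he, hce⟩ := exists_strictMono_forall_eq c hc
      (lt_of_lt_of_le (by nlinarith) hν)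
    refine ⟨y, hy, univ.biUnion fun j => T (e j),
      biUnion_subset.mpr fun j _ => (hTW _).trans (hWG _),
      ⟨_, mem_biUnion.mpr ⟨⟨0, hd⟩, mem_univ _, (hTne _).choose_spec⟩⟩, ?_, ?_⟩
    · rw [mulSeq_replicate_succ]
      exact biUnion_mem_mulK hW he (fun j => hTL _) (fun j => hTW _) (fun j => hTne _)
    · simp only [mem_biUnion, mem_univ, true_and, forall_exists_index]
      intro x j hx
      rw [hTc _ x hx, hce j]

lemma blockPigeonhole_succ (hU : ExpSparse U) (hmU : ∀ x ∈ U, m < x)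
    (hfU : ∀ x ∈ U, f x < m) (ih : BlockPigeonhole θ f m n U) :
    BlockPigeonhole θ f m (n + 1) U := by
  rintro F hFU ⟨Z, hZL, hZF, hZ⟩
  have hZU : ∀ j, Z j ⊆ U := fun j => (hZF j).trans hFU
  have hne : ∀ j, (Z j).Nonempty := fun j => nonempty_of_mem_largeStar (hZL j)
  have tail : ∀ j : Fin m, ∃ c < m, ∃ T ⊆ Z j.succ, T.Nonempty ∧
      T ∈ MulSeq θ (LargeStar θ n) (List.replicate (n + 1) (maxN (Z j.castSucc) + 1)) ∧
      ∀ x ∈ T, f x = c := by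
    intro j
    have hM : maxN (Z j.castSucc) ∈ U := hZU _ (maxN_mem (hne _))
    have hν : minN (Z j.succ) ∈ U := hZU _ (minN_mem (hne _))
    have hMν : maxN (Z j.castSucc) < minN (Z j.succ) :=
      hZ _ _ Fin.castSucc_lt_succ _ (maxN_mem (hne _)) _ (minN_mem (hne _))
    have hbound : (m + 1) * (maxN (Z j.castSucc) + 1) ≤ minN (Z j.succ) := calc
      _ ≤ maxN (Z j.castSucc) * (maxN (Z j.castSucc) + 1) := Nat.mul_le_mul_right _ (hmU _ hM)
      _ ≤ 4 ^ maxN (Z j.castSucc) := (mul_succ_lt_four_pow _).le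
      _ ≤ minN (Z j.succ) := (hU _ hM _ hν hMν).le
    obtain ⟨c, hc, T, hTZ, hT⟩ := exists_monochromatic_of_mem_mulSeq hfU ih (Nat.succ_pos _)
      hbound (n + 1) ((erase_subset _ _).trans (hZU _)) (hZL j.succ).2
    exact ⟨c, hc, T, hTZ.trans (erase_subset _ _), hT⟩
  choose c hc T hTZ hTne hTL hTc using tail
  have extend : ∀ (j : Fin m) (k : Fin (m + 1)) (μ : ℕ), k ≤ j.castSucc → μ ∈ Z k →
      f μ = c j → ∃ Y ⊆ F, Y ∈ LargeStar θ (n + 1) ∧ ∀ x ∈ Y, ∀ y ∈ Y, f x = f y := by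
    intro j k μ hk hμ hfμ
    have hμT : ∀ x ∈ T j, μ < x := fun x hx =>
      hZ k j.succ (hk.trans_lt Fin.castSucc_lt_succ) μ hμ x (hTZ j hx)
    have hcol : ∀ x ∈ insert μ (T j), f x = c j := by
      simpa only [mem_insert, forall_eq_or_imp] using ⟨hfμ, hTc j⟩
    exact ⟨insert μ (T j), insert_subset (hZF k hμ) ((hTZ j).trans (hZF _)),
      insert_mem_largeStar_succ hμT (Nat.le_succ_of_le (le_maxN_of_le hZ hk hμ (hne _))) (hTL j),
      fun x hx y hy => (hcol x hx).trans (hcol y hy).symm⟩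
  rcases exists_lt_eq_or_forall_exists_eq c hc with ⟨a, b, hab, hcab⟩ | hsurj
  · obtain ⟨μ, hμ⟩ := hTne a
    exact extend b a.succ μ (Fin.succ_le_castSucc_iff.mpr hab) (hTZ a hμ) (by rw [hTc a μ hμ, hcab])
  · obtain ⟨e, he⟩ := hne 0
    obtain ⟨j, hj⟩ := hsurj (f e) (hfU e (hZU 0 he))
    exact extend j 0 e (Fin.zero_le _) he hj.symm

theorem blockPigeonhole (hU : ExpSparse U) (hmU : ∀ x ∈ U, m < x) (hfU : ∀ x ∈ U, f x < m) :
    ∀ n, BlockPigeonhole θ f m n U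
  | 0 => blockPigeonhole_zero
  | n + 1 => blockPigeonhole_succ hU hmU hfU (blockPigeonhole hU hmU hfU n)

end Homogeneous

/-- pigeonhole principle with min X colors. -/
theorem stmt_11 (θ : ℕ → ℕ → ℕ → Prop) (n : ℕ) (X : Finset ℕ)
    (h3 : 3 ≤ minN X)
    (hX : X ∈ LargeStar θ (n + 2))
    (hsp : ExpSparse X)
    (f : ℕ → ℕ) (hf : ∀ x ∈ X, f x < minN X) :
    ∃ Y ⊆ X, Y ∈ LargeStar θ n ∧ ∀ x ∈ Y, ∀ y ∈ Y, f x = f y := by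
  set m := minN X
  have hrest : X.erase m ∈ MulK θ (MulK θ
      (MulSeq θ (LargeStar θ (n + 1)) (List.replicate n m)) m) m := by
    simpa only [mulSeq_replicate_succ] using hX.2
  have hblocks : X.erase m ∈ MulKPlain (LargeStar θ (n + 1)) (m + 1) := by
    have hsub : ∀ A ∈ MulSeq θ (LargeStar θ (n + 1)) (List.replicate n m),
        ∃ B ∈ LargeStar θ (n + 1), B ⊆ A :=
      fun A hA => exists_subset_of_mem_mulSeq_replicate (by omega) n hA
    apply mulKPlain_anti (show m + 1 ≤ m * m by nlinarith)
    apply mulKPlain_mulKPlain_subset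
    apply mulKPlain_mono (mulKPlain_subset_of_forall_exists_subset hsub m)
    apply mulKPlain_mono (mulK_subset_mulKPlain _ m)
    exact mulK_subset_mulKPlain _ m hrest
  obtain ⟨Y, hYX, hY, hYf⟩ := blockPigeonhole (hsp.mono (erase_subset m X))
    (fun x hx => lt_of_mem_erase_minN hx) (fun x hx => hf x (mem_of_mem_erase hx)) n
    (X.erase m) subset_rfl hblocks
  exact ⟨Y, hYX.trans (erase_subset m X), hY, hYf⟩
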